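/- arXiv:2106.06552 — 3 statements merged into one kernel-verified Lean document; each statement's English description precedes it below -/
import Mathlib

section
/- For every triple of functions a : {-1,1}² → [-1,1], b : {-1,1}² → [-1,1], c : {-1,1}² → [-1,1], the sum over all (x₁,x₂,x₃) ∈ {-1,1}³ of Q_G(x₁,x₂,x₃) · a(x₁,x₃) · b(x₁,x₂) · c(x₂,x₃) is at most 6, where Q_G(x₁,x₂,x₃) = 1 - (1-x₁)(1-x₂)(1-x₃)/4. Moreover the bound 6 is attained by some choice of a, b, c with values in {-1,1}. -/
noncomputable def QG (x₁ x₂ x₃ : ℝ) : ℝ := 1 - (1 - x₁) * (1 - x₂) * (1 - x₃) / 4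

/-!
For deterministic strategies (`a`, `b`, `c` valued in `±1`) the eight terms `Q_G(x) a b c` are
`±1`, and their product is `∏ Q_G = -1`, since every value of `a`, `b` and `c` occurs in exactly
two terms. Hence some term is `-1` and the sum is at most `6`. The sum is affine in each of `a`,
`b`, `c` separately, so replacing the values of one of them by the signs of their coefficients
does not decrease it; this reduces the general case to the deterministic one.
-/

open Finset

theorem Finset.sum_le_card_sub_two_of_prod_eq_neg_one {ι : Type*} [DecidableEq ι] {s : Finset ι}
    {e : ι → ℝ} (he : ∀ i ∈ s, e i = 1 ∨ e i = -1) (hprod : ∏ i ∈ s, e i = -1) :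
    ∑ i ∈ s, e i ≤ #s - 2 := by
  obtain ⟨j, hj, hej⟩ : ∃ j ∈ s, e j = -1 := by
    by_contra! h
    have : ∏ i ∈ s, e i = 1 := prod_eq_one fun i hi => (he i hi).resolve_right (h i hi)
    norm_num [this] at hprod
  have hle : ∑ i ∈ s.erase j, e i ≤ #s - 1 :=
    calc ∑ i ∈ s.erase j, e i ≤ ∑ i ∈ s.erase j, (1 : ℝ) :=
          sum_le_sum fun i hi => (he i (mem_of_mem_erase hi)).elim le_of_eq fun h => by linarith
      _ = #s - 1 := by
          rw [sum_const, card_erase_of_mem hj, nsmul_one, Nat.cast_pred (card_pos.mpr ⟨j, hj⟩)]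
  rw [← add_sum_erase s e hj, hej]
  linarith

theorem exists_sign_le_sum_sum_mul {α β : Type*} (s : Finset α) (t : Finset β) (f w : α → β → ℝ)
    (hf : ∀ u ∈ s, ∀ v ∈ t, |f u v| ≤ 1) :
    ∃ g : α → β → ℝ, (∀ u v, g u v = 1 ∨ g u v = -1) ∧
      ∑ u ∈ s, ∑ v ∈ t, f u v * w u v ≤ ∑ u ∈ s, ∑ v ∈ t, g u v * w u v := by
  refine ⟨fun u v => if 0 ≤ w u v then 1 else -1,
    fun u v => by by_cases h : 0 ≤ w u v <;> simp [h], ?_⟩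
  refine sum_le_sum fun u hu => sum_le_sum fun v hv => ?_
  calc f u v * w u v ≤ |f u v| * |w u v| := by rw [← abs_mul]; exact le_abs_self _
    _ ≤ |w u v| := mul_le_of_le_one_left (abs_nonneg _) (hf u hu v hv)
    _ = _ := by by_cases h : 0 ≤ w u v <;> simp [h, abs_of_nonneg, abs_of_neg, not_le.mp]

theorem pow_eq_one_of_eq_one_or_eq_neg_one {x : ℝ} {n : ℕ} (hx : x = 1 ∨ x = -1) (hn : Even n) :
    x ^ n = 1 := by
  rcases hx with rfl | rfl
  · exact one_pow n
  · exact hn.neg_one_pow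

theorem mul_eq_one_or_eq_neg_one {x y : ℝ} (hx : x = 1 ∨ x = -1) (hy : y = 1 ∨ y = -1) :
    x * y = 1 ∨ x * y = -1 := by
  rcases hx with rfl | rfl <;> rcases hy with rfl | rfl <;> norm_num

def tripartiteSum {α : Type*} (s : Finset α) (Q : α → α → α → ℝ) (a b c : α → α → ℝ) : ℝ :=
  ∑ x₁ ∈ s, ∑ x₂ ∈ s, ∑ x₃ ∈ s, Q x₁ x₂ x₃ * a x₁ x₃ * b x₁ x₂ * c x₂ x₃

namespace tripartiteSum

variable {α : Type*} (s : Finset α) (Q : α → α → α → ℝ) (a b c : α → α → ℝ)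

theorem eq_sum_sum_left_mul :
    tripartiteSum s Q a b c =
      ∑ x₁ ∈ s, ∑ x₃ ∈ s, a x₁ x₃ * ∑ x₂ ∈ s, Q x₁ x₂ x₃ * b x₁ x₂ * c x₂ x₃ := by
  unfold tripartiteSum
  refine sum_congr rfl fun x₁ _ => ?_
  rw [sum_comm]
  simp only [mul_sum]
  exact sum_congr rfl fun _ _ => sum_congr rfl fun _ _ => by ring

theorem eq_sum_sum_mid_mul :
    tripartiteSum s Q a b c =
      ∑ x₁ ∈ s, ∑ x₂ ∈ s, b x₁ x₂ * ∑ x₃ ∈ s, Q x₁ x₂ x₃ * a x₁ x₃ * c x₂ x₃ := by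
  unfold tripartiteSum
  simp only [mul_sum]
  exact sum_congr rfl fun _ _ => sum_congr rfl fun _ _ => sum_congr rfl fun _ _ => by ring

theorem eq_sum_sum_right_mul :
    tripartiteSum s Q a b c =
      ∑ x₂ ∈ s, ∑ x₃ ∈ s, c x₂ x₃ * ∑ x₁ ∈ s, Q x₁ x₂ x₃ * a x₁ x₃ * b x₁ x₂ := by
  unfold tripartiteSum
  rw [sum_comm]
  refine sum_congr rfl fun x₂ _ => ?_
  rw [sum_comm]
  simp only [mul_sum]
  exact sum_congr rfl fun _ _ => sum_congr rfl fun _ _ => by ring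

theorem exists_sign_le (ha : ∀ u ∈ s, ∀ v ∈ s, |a u v| ≤ 1) (hb : ∀ u ∈ s, ∀ v ∈ s, |b u v| ≤ 1)
    (hc : ∀ u ∈ s, ∀ v ∈ s, |c u v| ≤ 1) :
    ∃ a' b' c' : α → α → ℝ, (∀ u v, a' u v = 1 ∨ a' u v = -1) ∧
      (∀ u v, b' u v = 1 ∨ b' u v = -1) ∧ (∀ u v, c' u v = 1 ∨ c' u v = -1) ∧
      tripartiteSum s Q a b c ≤ tripartiteSum s Q a' b' c' := by
  obtain ⟨a', ha', hle_a⟩ := exists_sign_le_sum_sum_mul s s a _ ha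
  obtain ⟨b', hb', hle_b⟩ := exists_sign_le_sum_sum_mul s s b _ hb
  obtain ⟨c', hc', hle_c⟩ := exists_sign_le_sum_sum_mul s s c _ hc
  refine ⟨a', b', c', ha', hb', hc', ?_⟩
  calc tripartiteSum s Q a b c ≤ tripartiteSum s Q a' b c := by
        rw [eq_sum_sum_left_mul, eq_sum_sum_left_mul]; exact hle_a
    _ ≤ tripartiteSum s Q a' b' c := by
        rw [eq_sum_sum_mid_mul, eq_sum_sum_mid_mul]; exact hle_b
    _ ≤ tripartiteSum s Q a' b' c' := by
        rw [eq_sum_sum_right_mul, eq_sum_sum_right_mul]; exact hle_c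

theorem le_card_pow_sub_two [DecidableEq α] (hs : Even #s)
    (hQ : ∀ x₁ ∈ s, ∀ x₂ ∈ s, ∀ x₃ ∈ s, Q x₁ x₂ x₃ = 1 ∨ Q x₁ x₂ x₃ = -1)
    (hQprod : ∏ x₁ ∈ s, ∏ x₂ ∈ s, ∏ x₃ ∈ s, Q x₁ x₂ x₃ = -1)
    (ha : ∀ u v, a u v = 1 ∨ a u v = -1) (hb : ∀ u v, b u v = 1 ∨ b u v = -1)
    (hc : ∀ u v, c u v = 1 ∨ c u v = -1) :
    tripartiteSum s Q a b c ≤ #s ^ 3 - 2 := by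
  set e : α × α × α → ℝ := fun x =>
    Q x.1 x.2.1 x.2.2 * a x.1 x.2.2 * b x.1 x.2.1 * c x.2.1 x.2.2
  have he : ∀ x ∈ s ×ˢ s ×ˢ s, e x = 1 ∨ e x = -1 := by
    simp only [mem_product, and_imp, Prod.forall]
    intro x₁ x₂ x₃ h₁ h₂ h₃
    exact mul_eq_one_or_eq_neg_one (mul_eq_one_or_eq_neg_one
      (mul_eq_one_or_eq_neg_one (hQ x₁ h₁ x₂ h₂ x₃ h₃) (ha _ _)) (hb _ _)) (hc _ _)
  have hprod : ∏ x ∈ s ×ˢ s ×ˢ s, e x = -1 := by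
    have ha1 : ∏ x₁ ∈ s, ∏ x₂ ∈ s, ∏ x₃ ∈ s, a x₁ x₃ = 1 := by
      refine prod_eq_one fun x₁ _ => ?_
      rw [prod_comm, ← prod_eq_one fun x₃ _ => pow_eq_one_of_eq_one_or_eq_neg_one (ha x₁ x₃) hs]
      exact prod_congr rfl fun _ _ => prod_const _
    have hb1 : ∏ x₁ ∈ s, ∏ x₂ ∈ s, ∏ x₃ ∈ s, b x₁ x₂ = 1 :=
      prod_eq_one fun x₁ _ => prod_eq_one fun x₂ _ => by
        rw [prod_const, pow_eq_one_of_eq_one_or_eq_neg_one (hb x₁ x₂) hs]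
    have hc1 : ∏ x₁ ∈ s, ∏ x₂ ∈ s, ∏ x₃ ∈ s, c x₂ x₃ = 1 := by
      rw [prod_const, ← prod_pow, prod_eq_one fun x₂ _ => ?_]
      rw [← prod_pow, prod_eq_one fun x₃ _ => pow_eq_one_of_eq_one_or_eq_neg_one (hc x₂ x₃) hs]
    simp only [e, prod_product, prod_mul_distrib, hQprod, ha1, hb1, hc1]
    norm_num
  have hsum : tripartiteSum s Q a b c = ∑ x ∈ s ×ˢ s ×ˢ s, e x := by
    simp only [tripartiteSum, e, sum_product]
  have hcard : ((#(s ×ˢ s ×ˢ s) : ℕ) : ℝ) = #s ^ 3 := by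
    simp only [card_product]; push_cast; ring
  rw [hsum, ← hcard]
  exact sum_le_card_sub_two_of_prod_eq_neg_one he hprod

theorem le_card_pow_sub_two_of_abs_le_one [DecidableEq α] (hs : Even #s)
    (hQ : ∀ x₁ ∈ s, ∀ x₂ ∈ s, ∀ x₃ ∈ s, Q x₁ x₂ x₃ = 1 ∨ Q x₁ x₂ x₃ = -1)
    (hQprod : ∏ x₁ ∈ s, ∏ x₂ ∈ s, ∏ x₃ ∈ s, Q x₁ x₂ x₃ = -1)
    (ha : ∀ u ∈ s, ∀ v ∈ s, |a u v| ≤ 1) (hb : ∀ u ∈ s, ∀ v ∈ s, |b u v| ≤ 1)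
    (hc : ∀ u ∈ s, ∀ v ∈ s, |c u v| ≤ 1) :
    tripartiteSum s Q a b c ≤ #s ^ 3 - 2 := by
  obtain ⟨a', b', c', ha', hb', hc', hle⟩ := exists_sign_le s Q a b c ha hb hc
  exact hle.trans (le_card_pow_sub_two s Q a' b' c' hs hQ hQprod ha' hb' hc')

end tripartiteSum

theorem QG_eq_one_or_eq_neg_one :
    ∀ x₁ ∈ ({-1, 1} : Finset ℝ), ∀ x₂ ∈ ({-1, 1} : Finset ℝ), ∀ x₃ ∈ ({-1, 1} : Finset ℝ),
      QG x₁ x₂ x₃ = 1 ∨ QG x₁ x₂ x₃ = -1 := by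
  simp only [mem_insert, mem_singleton]
  rintro x₁ (rfl | rfl) x₂ (rfl | rfl) x₃ (rfl | rfl) <;> norm_num [QG]

theorem prod_QG :
    ∏ x₁ ∈ ({-1, 1} : Finset ℝ), ∏ x₂ ∈ ({-1, 1} : Finset ℝ), ∏ x₃ ∈ ({-1, 1} : Finset ℝ),
      QG x₁ x₂ x₃ = -1 := by
  norm_num [QG]

theorem stmt_2 :
    (∀ a b c : ℝ → ℝ → ℝ,
      (∀ u ∈ ({-1, 1} : Finset ℝ), ∀ v ∈ ({-1, 1} : Finset ℝ), |a u v| ≤ 1) →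
      (∀ u ∈ ({-1, 1} : Finset ℝ), ∀ v ∈ ({-1, 1} : Finset ℝ), |b u v| ≤ 1) →
      (∀ u ∈ ({-1, 1} : Finset ℝ), ∀ v ∈ ({-1, 1} : Finset ℝ), |c u v| ≤ 1) →
      ∑ x₁ ∈ ({-1, 1} : Finset ℝ), ∑ x₂ ∈ ({-1, 1} : Finset ℝ), ∑ x₃ ∈ ({-1, 1} : Finset ℝ),
        QG x₁ x₂ x₃ * a x₁ x₃ * b x₁ x₂ * c x₂ x₃ ≤ 6) ∧
    (∃ a b c : ℝ → ℝ → ℝ,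
      (∀ u ∈ ({-1, 1} : Finset ℝ), ∀ v ∈ ({-1, 1} : Finset ℝ), a u v = 1 ∨ a u v = -1) ∧
      (∀ u ∈ ({-1, 1} : Finset ℝ), ∀ v ∈ ({-1, 1} : Finset ℝ), b u v = 1 ∨ b u v = -1) ∧
      (∀ u ∈ ({-1, 1} : Finset ℝ), ∀ v ∈ ({-1, 1} : Finset ℝ), c u v = 1 ∨ c u v = -1) ∧
      ∑ x₁ ∈ ({-1, 1} : Finset ℝ), ∑ x₂ ∈ ({-1, 1} : Finset ℝ), ∑ x₃ ∈ ({-1, 1} : Finset ℝ),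
        QG x₁ x₂ x₃ * a x₁ x₃ * b x₁ x₂ * c x₂ x₃ = 6) := by
  have hcard : #({-1, 1} : Finset ℝ) = 2 := by norm_num
  refine ⟨fun a b c ha hb hc => ?_, ?_⟩
  · have hle := tripartiteSum.le_card_pow_sub_two_of_abs_le_one {-1, 1} QG a b c
      (hcard ▸ even_two) QG_eq_one_or_eq_neg_one prod_QG ha hb hc
    rw [hcard] at hle
    exact hle.trans_eq (by norm_num)
  · refine ⟨fun _ _ => 1, fun _ _ => 1, fun _ _ => 1, ?_, ?_, ?_, ?_⟩ <;> norm_num [QG]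
end

section
/- Let q be the uniform distribution on {-1,1}³ and consider target function f(x,y) = y₁y₂y₃·Q_G(x₁,x₂,x₃) with Q_G(x) = 1 - (1-x₁)(1-x₂)(1-x₃)/4. Suppose party 1 outputs a deterministic guess G₁ that is an arbitrary {-1,1}-valued function of (x₁, y₁, x₃, m₂, m₃), where m₂ is an arbitrary {-1,1}-valued function of (x₂, y₂, x₁) and m₃ is an arbitrary {-1,1}-valued function of (x₃, y₃, x₂). Then the probability over uniformly random (x₁,x₂,x₃,y₁,y₂,y₃) ∈ {-1,1}⁶ that G₁ = f is at most 7/8. -/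
notation "pm" => ({-1, 1} : Finset ℝ)

/-!
Fix party 1's local input `(x₁, x₃, y₁)`. The remaining inputs `(x₂, y₂, y₃)` form a block of
eight, on which the guess sees `(y₂, y₃)` only through the messages `m₂ (x₂, y₂, x₁)` and
`m₃ (x₃, y₃, x₂)`. Encoding `±1` by `Bool` with `true ↦ -1`, the target is the parity
`y₁ ⊕ (x₁ ∧ x₂ ∧ x₃) ⊕ y₂ ⊕ y₃`.

If some `m₂ (x₂, ·, x₁)` is constant, the two values of `y₂` yield the same guess but opposite
targets, so each of the four blocks with this `x₁` loses two inputs; likewise for `m₃`. Otherwise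
every message is `y ⊕ (something not depending on y)`, and after this change of variables a block
wins exactly four inputs unless a parity condition holds. That condition, for all blocks, would
write `x₁ ∧ x₃` as `α x₁ ⊕ β x₃`, which is impossible; so two blocks lose four inputs each.
In every case at least 8 of the 64 inputs are lost.
-/

namespace GYNI

theorem sum_ite_eq_of_ne {f : Bool → Bool} (hf : f false ≠ f true) (w : Bool) :
    ∑ b, (if w = f b then 1 else 0 : ℕ) = 1 := by
  rw [Fintype.sum_bool]
  revert hf
  generalize f true = y
  generalize f false = x
  cases w <;> cases x <;> cases y <;> decide

theorem sum_ite_le_two (P : Bool → Prop) [DecidablePred P] :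
    ∑ b, (if P b then 1 else 0 : ℕ) ≤ 2 := by
  rw [Fintype.sum_bool]
  split_ifs <;> omega

theorem sum_xor_left {M : Type*} [AddCommMonoid M] (f : Bool → M) (x : Bool) :
    ∑ b, f (x ^^ b) = ∑ b, f b := by
  cases x <;> simp [add_comm]

theorem sum_sum_xor_left {M : Type*} [AddCommMonoid M] (F : Bool → Bool → M) (x y : Bool) :
    ∑ b, ∑ c, F (x ^^ b) (y ^^ c) = ∑ u, ∑ v, F u v := by
  simp only [sum_xor_left (F _) y]
  exact sum_xor_left (fun u => ∑ v, F u v) x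

-- `a₁ && a₃` is `true` at an odd number of points, `α a₁ ^^ β a₃` at an even number.
theorem exists_and_ne_xor (α β : Bool → Bool) : ∃ a₁ a₃, (a₁ && a₃) ≠ (α a₁ ^^ β a₃) := by
  revert α β
  decide

-- `a`, `b`, `c` stand for `x₂`, `y₂`, `y₃`; `p a b` and `r a c` are the two messages.
def blockScore (g p r : Bool → Bool → Bool) (σ : Bool → Bool) : ℕ :=
  ∑ a, ∑ b, ∑ c, if g (p a b) (r a c) = (σ a ^^ b ^^ c) then 1 else 0

theorem blockScore_le_eight (g p r : Bool → Bool → Bool) (σ : Bool → Bool) :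
    blockScore g p r σ ≤ 8 :=
  calc blockScore g p r σ ≤ ∑ _a : Bool, ∑ _b : Bool, 2 := by
        unfold blockScore
        gcongr with a _ b _
        exact sum_ite_le_two _
    _ = 8 := rfl

theorem blockScore_swap (g p r : Bool → Bool → Bool) (σ : Bool → Bool) :
    blockScore g p r σ = blockScore (flip g) r p σ := by
  unfold blockScore
  refine Finset.sum_congr rfl fun a _ => ?_
  rw [Finset.sum_comm]
  simp only [flip, Bool.xor_right_comm (σ a)]
  rfl

theorem blockScore_le_six_of_right_collision {g p r : Bool → Bool → Bool} {σ : Bool → Bool}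
    {a₀ : Bool} (h : r a₀ true = r a₀ false) : blockScore g p r σ ≤ 6 :=
  calc blockScore g p r σ ≤ ∑ a : Bool, ∑ _b : Bool, if a = a₀ then 1 else 2 := by
        unfold blockScore
        gcongr with a _ b _
        split_ifs with ha
        · subst ha
          have hr : ∀ c, r a c = r a false := fun c => by cases c <;> simp [h]
          simp only [hr]
          exact (sum_ite_eq_of_ne (by simp) _).le
        · exact sum_ite_le_two _
    _ = 6 := by cases a₀ <;> rfl

theorem blockScore_le_six_of_left_collision {g p r : Bool → Bool → Bool} {σ : Bool → Bool}
    {a₀ : Bool} (h : p a₀ true = p a₀ false) : blockScore g p r σ ≤ 6 :=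
  blockScore_swap g p r σ ▸ blockScore_le_six_of_right_collision h

theorem blockScore_xor_eq_four (g : Bool → Bool → Bool) {P R σ : Bool → Bool}
    (h : (σ false ^^ σ true) ≠ ((P false ^^ P true) ^^ (R false ^^ R true))) :
    blockScore g (fun a b => P a ^^ b) (fun a c => R a ^^ c) σ = 4 := by
  set τ : Bool → Bool := fun a => σ a ^^ P a ^^ R a
  have hτ : τ false ≠ τ true := by
    rw [← Bool.xor_iff_ne] at h ⊢
    simpa [τ, Bool.xor_left_comm] using h
  have target : ∀ a b c, (σ a ^^ b ^^ c) = (τ a ^^ (P a ^^ b) ^^ (R a ^^ c)) := by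
    intro a b c
    simp [τ, Bool.xor_left_comm]
  calc blockScore g (fun a b => P a ^^ b) (fun a c => R a ^^ c) σ
      = ∑ a, ∑ b, ∑ c, if g (P a ^^ b) (R a ^^ c) = (τ a ^^ (P a ^^ b) ^^ (R a ^^ c))
          then 1 else 0 := by
        simp only [blockScore, target]
    _ = ∑ a, ∑ u, ∑ v, if g u v = (τ a ^^ u ^^ v) then 1 else 0 := by
        refine Finset.sum_congr rfl fun a _ => ?_
        exact sum_sum_xor_left (fun u v => if g u v = (τ a ^^ u ^^ v) then 1 else 0) (P a) (R a)
    _ = ∑ u, ∑ v, ∑ a, if g u v = (τ a ^^ u ^^ v) then 1 else 0 := by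
        rw [Finset.sum_comm]
        exact Finset.sum_congr rfl fun u _ => Finset.sum_comm
    _ = ∑ _u : Bool, ∑ _v : Bool, 1 := by
        refine Finset.sum_congr rfl fun u _ => Finset.sum_congr rfl fun v _ => ?_
        exact sum_ite_eq_of_ne (f := fun a => τ a ^^ u ^^ v)
          (by simpa only [Ne, Bool.xor_left_inj] using hτ) _
    _ = 4 := rfl

theorem eq_xor_of_ne {f : Bool → Bool} (h : f true ≠ f false) : f = (f false ^^ ·) := by
  funext b
  cases b
  · simp
  · simpa using Bool.eq_not.mpr h

theorem sum_blockScore_le (g : Bool → Bool → Bool → Bool → Bool → Bool)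
    (m₂ m₃ : Bool → Bool → Bool → Bool) :
    ∑ a₁, ∑ a₃, ∑ b₁, blockScore (g a₁ b₁ a₃) (fun a₂ b₂ => m₂ a₂ b₂ a₁)
      (fun a₂ b₃ => m₃ a₃ b₃ a₂) (fun a₂ => b₁ ^^ (a₁ && a₂ && a₃)) ≤ 56 := by
  by_cases h₂ : ∃ a₁ a₂, m₂ a₂ true a₁ = m₂ a₂ false a₁
  · obtain ⟨a₁', a₂, h⟩ := h₂
    calc _ ≤ ∑ a₁ : Bool, ∑ _a₃ : Bool, ∑ _b₁ : Bool, if a₁ = a₁' then 6 else 8 := by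
          gcongr with a₁ _ a₃ _ b₁ _
          split_ifs with ha
          · subst ha
            exact blockScore_le_six_of_left_collision h
          · exact blockScore_le_eight ..
      _ = 56 := by cases a₁' <;> rfl
  by_cases h₃ : ∃ a₃ a₂, m₃ a₃ true a₂ = m₃ a₃ false a₂
  · obtain ⟨a₃', a₂, h⟩ := h₃
    calc _ ≤ ∑ _a₁ : Bool, ∑ a₃ : Bool, ∑ _b₁ : Bool, if a₃ = a₃' then 6 else 8 := by
          gcongr with a₁ _ a₃ _ b₁ _
          split_ifs with ha
          · subst ha
            exact blockScore_le_six_of_right_collision h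
          · exact blockScore_le_eight ..
      _ = 56 := by cases a₃' <;> rfl
  push Not at h₂ h₃
  obtain ⟨a₁', a₃', hne⟩ := exists_and_ne_xor (fun a₁ => m₂ false false a₁ ^^ m₂ true false a₁)
    (fun a₃ => m₃ a₃ false false ^^ m₃ a₃ false true)
  calc _ ≤ ∑ a₁ : Bool, ∑ a₃ : Bool, ∑ _b₁ : Bool, if a₁ = a₁' ∧ a₃ = a₃' then 4 else 8 := by
        gcongr with a₁ _ a₃ _ b₁ _
        split_ifs with ha
        · obtain ⟨rfl, rfl⟩ := ha
          rw [show (fun a₂ b₂ => m₂ a₂ b₂ a₁) = fun a₂ b₂ => m₂ a₂ false a₁ ^^ b₂ from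
              funext fun a₂ => eq_xor_of_ne (h₂ a₁ a₂),
            show (fun a₂ b₃ => m₃ a₃ b₃ a₂) = fun a₂ b₃ => m₃ a₃ false a₂ ^^ b₃ from
              funext fun a₂ => eq_xor_of_ne (h₃ a₃ a₂)]
          exact (blockScore_xor_eq_four _ (by simpa using hne)).le
        · exact blockScore_le_eight ..
    _ = 56 := by cases a₁' <;> cases a₃' <;> rfl

theorem gyni_score_le (g : Bool → Bool → Bool → Bool → Bool → Bool)
    (m₂ m₃ : Bool → Bool → Bool → Bool) :
    ∑ a₁, ∑ a₂, ∑ a₃, ∑ b₁, ∑ b₂, ∑ b₃,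
      (if g a₁ b₁ a₃ (m₂ a₂ b₂ a₁) (m₃ a₃ b₃ a₂) = (b₁ ^^ (a₁ && a₂ && a₃) ^^ b₂ ^^ b₃)
        then 1 else 0 : ℕ) ≤ 56 := by
  convert sum_blockScore_le g m₂ m₃ using 2 with a₁
  rw [Finset.sum_comm]
  refine Finset.sum_congr rfl fun a₃ _ => ?_
  rw [Finset.sum_comm]
  rfl

def boolSign (b : Bool) : ℝ := if b then -1 else 1

theorem boolSign_xor (a b : Bool) : boolSign (a ^^ b) = boolSign a * boolSign b := by
  cases a <;> cases b <;> norm_num [boolSign]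

theorem boolSign_injective : Function.Injective boolSign := by
  intro a b
  cases a <;> cases b <;> norm_num [boolSign]

theorem boolSign_mem_pm (b : Bool) : boolSign b ∈ pm := by
  cases b <;> simp [boolSign]

theorem exists_boolSign_eq {x : ℝ} (hx : x = 1 ∨ x = -1) : ∃ b, boolSign b = x := by
  rcases hx with rfl | rfl
  exacts [⟨false, rfl⟩, ⟨true, rfl⟩]

theorem sum_pm_eq_sum_bool {M : Type*} [AddCommMonoid M] (f : ℝ → M) :
    ∑ x ∈ pm, f x = ∑ b, f (boolSign b) := by
  rw [Fintype.sum_bool, Finset.sum_pair (by norm_num)]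
  simp [boolSign, add_comm]

theorem QG_boolSign (a₁ a₂ a₃ : Bool) :
    QG (boolSign a₁) (boolSign a₂) (boolSign a₃) = boolSign (a₁ && a₂ && a₃) := by
  cases a₁ <;> cases a₂ <;> cases a₃ <;> norm_num [QG, boolSign]

end GYNI

open GYNI in
theorem stmt_10 (G₁ : ℝ → ℝ → ℝ → ℝ → ℝ → ℝ) (m₂ m₃ : ℝ → ℝ → ℝ → ℝ)
    (hm₂ : ∀ x₂ ∈ pm, ∀ y₂ ∈ pm, ∀ x₁ ∈ pm, m₂ x₂ y₂ x₁ = 1 ∨ m₂ x₂ y₂ x₁ = -1)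
    (hm₃ : ∀ x₃ ∈ pm, ∀ y₃ ∈ pm, ∀ x₂ ∈ pm, m₃ x₃ y₃ x₂ = 1 ∨ m₃ x₃ y₃ x₂ = -1)
    (hG : ∀ x₁ ∈ pm, ∀ y₁ ∈ pm, ∀ x₃ ∈ pm, ∀ u ∈ pm, ∀ v ∈ pm,
      G₁ x₁ y₁ x₃ u v = 1 ∨ G₁ x₁ y₁ x₃ u v = -1) :
    (1 / 64 : ℝ) * ∑ x₁ ∈ pm, ∑ x₂ ∈ pm, ∑ x₃ ∈ pm, ∑ y₁ ∈ pm, ∑ y₂ ∈ pm, ∑ y₃ ∈ pm,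
        (if G₁ x₁ y₁ x₃ (m₂ x₂ y₂ x₁) (m₃ x₃ y₃ x₂) = y₁ * y₂ * y₃ * QG x₁ x₂ x₃
          then (1 : ℝ) else 0) ≤ 7 / 8 := by
  have mem := boolSign_mem_pm
  choose B₂ hB₂ using fun a b c => exists_boolSign_eq (hm₂ _ (mem a) _ (mem b) _ (mem c))
  choose B₃ hB₃ using fun a b c => exists_boolSign_eq (hm₃ _ (mem a) _ (mem b) _ (mem c))
  choose BG hBG using fun a b c d e =>
    exists_boolSign_eq (hG _ (mem a) _ (mem b) _ (mem c) _ (mem d) _ (mem e))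
  have target (a₁ a₂ a₃ b₁ b₂ b₃ : Bool) :
      boolSign b₁ * boolSign b₂ * boolSign b₃ * QG (boolSign a₁) (boolSign a₂) (boolSign a₃) =
        boolSign (b₁ ^^ (a₁ && a₂ && a₃) ^^ b₂ ^^ b₃) := by
    rw [QG_boolSign]
    simp only [boolSign_xor]
    ring
  simp only [sum_pm_eq_sum_bool, ← hB₂, ← hB₃, ← hBG, target, boolSign_injective.eq_iff]
  have hscore := (Nat.cast_le (α := ℝ)).mpr (gyni_score_le BG B₂ B₃)
  push_cast at hscore
  linarith
end

section
/- Let Q : {-1,1}ⁿ → ℝ be nonvanishing, Γ = Σₓ |Q(x)|, and q(x) = |Q(x)|/Γ. Suppose the parties share outcome random variables whose conditional distributions achieve full correlators Eₓ with Σₓ Q(x)Eₓ = B. If in the communication protocol each party broadcasts mᵢ = yᵢaᵢ and guesses G = ∏ᵢ mᵢ, then the probability (over x ∼ q, y uniform, and the outcome randomness) that G equals f(x,y) = y₁⋯yₙ S[Q(x)] is exactly 1/2 + B/(2Γ). -/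
/-!
The guess is right exactly when `∏ᵢ aᵢ = S[Q(x)]`, because the product `∏ᵢ yᵢ = ±1` appears on both
sides and cancels; in particular `y` plays no role. For `±1`-valued quantities the indicator of
`u = s` is `(1 + s u) / 2`, so for a fixed input `x` the success probability is `(1 + S[Q(x)] Eₓ) / 2`.
Weighting by `q(x) = |Q(x)| / Γ` and using `S[Q(x)] |Q(x)| = Q(x)` gives
`Σₓ (|Q(x)| + Q(x) Eₓ) / (2Γ) = 1/2 + B/(2Γ)`.
-/

noncomputable def cube (n : ℕ) : Finset (Fin n → ℝ) :=
  Fintype.piFinset fun _ => ({-1, 1} : Finset ℝ)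

open Finset

lemma Finset.prod_eq_neg_one_or_eq_one {ι R : Type*} [CommMonoid R] [HasDistribNeg R]
    {s : Finset ι} {f : ι → R} (hf : ∀ i ∈ s, f i = -1 ∨ f i = 1) :
    ∏ i ∈ s, f i = -1 ∨ ∏ i ∈ s, f i = 1 := by
  refine prod_induction f (fun u => u = -1 ∨ u = 1) ?_ (Or.inr rfl) hf
  rintro a b (rfl | rfl) (rfl | rfl) <;> simp

lemma ite_eq_eq_one_add_mul_div_two {K : Type*} [Field K] [CharZero K] [DecidableEq K] {u v : K}
    (hu : u = -1 ∨ u = 1) (hv : v = -1 ∨ v = 1) :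
    (if u = v then (1 : K) else 0) = (1 + v * u) / 2 := by
  rcases hu with rfl | rfl <;> rcases hv with rfl | rfl <;> norm_num

lemma Real.sign_mul_abs (r : ℝ) : sign r * |r| = r := by
  rcases lt_trichotomy r 0 with h | rfl | h
  · rw [sign_of_neg h, abs_of_neg h, neg_one_mul, neg_neg]
  · simp
  · rw [sign_of_pos h, abs_of_pos h, one_mul]

lemma mem_cube {n : ℕ} {x : Fin n → ℝ} : x ∈ cube n ↔ ∀ i, x i = -1 ∨ x i = 1 := by
  simp [cube, Fintype.mem_piFinset]

lemma card_cube (n : ℕ) : #(cube n) = 2 ^ n := by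
  rw [cube, Fintype.card_piFinset, prod_const, card_univ, Fintype.card_fin,
    card_pair (by norm_num)]

lemma prod_eq_neg_one_or_eq_one_of_mem_cube {n : ℕ} {x : Fin n → ℝ} (hx : x ∈ cube n) :
    ∏ i, x i = -1 ∨ ∏ i, x i = 1 :=
  Finset.prod_eq_neg_one_or_eq_one fun i _ => mem_cube.mp hx i

lemma prod_mul_eq_prod_mul_iff_of_mem_cube {n : ℕ} {y : Fin n → ℝ} (hy : y ∈ cube n)
    (a : Fin n → ℝ) (s : ℝ) : ∏ i, y i * a i = (∏ i, y i) * s ↔ ∏ i, a i = s := by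
  have hy0 : ∏ i, y i ≠ 0 := by
    rcases prod_eq_neg_one_or_eq_one_of_mem_cube hy with h | h <;> norm_num [h]
  rw [prod_mul_distrib, mul_right_inj' hy0]

noncomputable def fullCorrelator {n : ℕ} (p : (Fin n → ℝ) → ℝ) : ℝ :=
  ∑ a ∈ cube n, p a * ∏ i, a i

lemma sum_sum_mul_ite_prod_mul_eq_mul_correlator {n : ℕ} (w : ℝ) (p : (Fin n → ℝ) → ℝ)
    (hp : ∑ a ∈ cube n, p a = 1) {s : ℝ} (hs : s = -1 ∨ s = 1) :
    ∑ y ∈ cube n, ∑ a ∈ cube n,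
        w * (1 / 2 ^ n) * p a * (if ∏ i, y i * a i = (∏ i, y i) * s then (1 : ℝ) else 0) =
      w * ((1 + s * fullCorrelator p) / 2) := by
  have hsummand : ∀ y ∈ cube n, ∀ a ∈ cube n,
      w * (1 / 2 ^ n) * p a * (if ∏ i, y i * a i = (∏ i, y i) * s then (1 : ℝ) else 0) =
        w / 2 ^ (n + 1) * p a + w * s / 2 ^ (n + 1) * (p a * ∏ i, a i) := by
    intro y hy a ha
    simp only [prod_mul_eq_prod_mul_iff_of_mem_cube hy]
    rw [ite_eq_eq_one_add_mul_div_two (prod_eq_neg_one_or_eq_one_of_mem_cube ha) hs]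
    ring
  have hy : ∀ y ∈ cube n, ∑ a ∈ cube n,
      w * (1 / 2 ^ n) * p a * (if ∏ i, y i * a i = (∏ i, y i) * s then (1 : ℝ) else 0) =
        w / 2 ^ (n + 1) * (1 + s * fullCorrelator p) := by
    intro y hy
    rw [sum_congr rfl (hsummand y hy), sum_add_distrib, ← mul_sum, ← mul_sum, hp,
      fullCorrelator]
    ring
  rw [sum_congr rfl hy, sum_const, card_cube, nsmul_eq_mul, Nat.cast_pow, Nat.cast_ofNat]
  field_simp
  ring

theorem stmt_14_general (n : ℕ) (Q : (Fin n → ℝ) → ℝ) (P : (Fin n → ℝ) → (Fin n → ℝ) → ℝ) (B Γ : ℝ)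
    (hQ : ∀ x ∈ cube n, Q x ≠ 0)
    (hΓ : Γ = ∑ x ∈ cube n, |Q x|)
    (hP1 : ∀ x ∈ cube n, ∑ a ∈ cube n, P x a = 1)
    (hB : ∑ x ∈ cube n, Q x * ∑ a ∈ cube n, P x a * ∏ i, a i = B) :
    ∑ x ∈ cube n, ∑ y ∈ cube n, ∑ a ∈ cube n,
        (|Q x| / Γ) * (1 / 2 ^ n) * P x a *
          (if (∏ i, y i * a i) = (∏ i, y i) * Real.sign (Q x) then (1 : ℝ) else 0) =
      1 / 2 + B / (2 * Γ) := by
  have hΓ0 : Γ ≠ 0 := by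
    rw [hΓ]
    exact (sum_pos (fun x hx => abs_pos.mpr (hQ x hx))
      ⟨fun _ => 1, mem_cube.mpr fun _ => Or.inr rfl⟩).ne'
  have hx : ∀ x ∈ cube n, ∑ y ∈ cube n, ∑ a ∈ cube n,
      (|Q x| / Γ) * (1 / 2 ^ n) * P x a *
        (if (∏ i, y i * a i) = (∏ i, y i) * Real.sign (Q x) then (1 : ℝ) else 0) =
      (|Q x| + Q x * fullCorrelator (P x)) / (2 * Γ) := by
    intro x hx
    rw [sum_sum_mul_ite_prod_mul_eq_mul_correlator _ (P x) (hP1 x hx)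
      (Real.sign_apply_eq_of_ne_zero _ (hQ x hx))]
    field_simp
    linear_combination fullCorrelator (P x) * Real.sign_mul_abs (Q x)
  rw [sum_congr rfl hx, ← sum_div, sum_add_distrib, ← hΓ]
  unfold fullCorrelator
  rw [hB]
  field_simp

theorem stmt_14 (n : ℕ) (Q : (Fin n → ℝ) → ℝ) (P : (Fin n → ℝ) → (Fin n → ℝ) → ℝ) (B Γ : ℝ)
    (hQ : ∀ x ∈ cube n, Q x ≠ 0)
    (hΓ : Γ = ∑ x ∈ cube n, |Q x|)
    (hPnn : ∀ x ∈ cube n, ∀ a ∈ cube n, 0 ≤ P x a)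
    (hP1 : ∀ x ∈ cube n, ∑ a ∈ cube n, P x a = 1)
    (hB : ∑ x ∈ cube n, Q x * ∑ a ∈ cube n, P x a * ∏ i, a i = B) :
    ∑ x ∈ cube n, ∑ y ∈ cube n, ∑ a ∈ cube n,
        (|Q x| / Γ) * (1 / 2 ^ n) * P x a *
          (if (∏ i, y i * a i) = (∏ i, y i) * Real.sign (Q x) then (1 : ℝ) else 0) =
      1 / 2 + B / (2 * Γ) :=
  stmt_14_general n Q P B Γ hQ hΓ hP1 hB
end
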